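/- For every positive integer j there exists a positive integer n_Δ(j) with n_Δ(j) ≥ 2j such that for every integer n ≥ n_Δ(j) one has u(n) − 2·u(n−j) + u(n−2j) > 0. -/

import Mathlib

/-- The number of unimodal sequences of size `n`. -/
noncomputable def uCount (n : ℕ) : ℕ :=
  Nat.card {p : List ℕ × ℕ × List ℕ //
    p.1.Pairwise (· ≤ ·) ∧ p.2.2.Pairwise (· ≥ ·) ∧
    (∀ x ∈ p.1, 1 ≤ x ∧ x ≤ p.2.1) ∧
    (∀ x ∈ p.2.2, 1 ≤ x ∧ x ≤ p.2.1) ∧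
    1 ≤ p.2.1 ∧ p.1.sum + p.2.1 + p.2.2.sum = n}

namespace UnimodalAux

/-- The defining predicate of a unimodal sequence of size `n`. -/
def P (n : ℕ) (p : List ℕ × ℕ × List ℕ) : Prop :=
  p.1.Pairwise (· ≤ ·) ∧ p.2.2.Pairwise (· ≥ ·) ∧
    (∀ x ∈ p.1, 1 ≤ x ∧ x ≤ p.2.1) ∧
    (∀ x ∈ p.2.2, 1 ≤ x ∧ x ≤ p.2.1) ∧
    1 ≤ p.2.1 ∧ p.1.sum + p.2.1 + p.2.2.sum = n

/-- The set of unimodal sequences of size `n`. -/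
def U (n : ℕ) : Set (List ℕ × ℕ × List ℕ) := {p | P n p}

lemma uCount_eq (n : ℕ) : uCount n = (U n).ncard := by
  rw [← Nat.card_coe_set_eq]
  rfl

/-- "Tall" condition: the peak exceeds everything else by at least `j`. -/
def TallCond (j : ℕ) (p : List ℕ × ℕ × List ℕ) : Prop :=
  j + 1 ≤ p.2.1 ∧ (∀ x ∈ p.1, x + j ≤ p.2.1) ∧ (∀ x ∈ p.2.2, x + j ≤ p.2.1)

def Tall (j n : ℕ) : Set (List ℕ × ℕ × List ℕ) := {p | P n p ∧ TallCond j p}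
def NT (j n : ℕ) : Set (List ℕ × ℕ × List ℕ) := {p | P n p ∧ ¬ TallCond j p}

lemma lists_finite (n : ℕ) :
    {l : List ℕ | l.length ≤ n ∧ ∀ x ∈ l, x ≤ n}.Finite := by
  have h := (List.finite_length_le (Fin (n + 1)) n).image (List.map Fin.val)
  refine h.subset ?_
  rintro l ⟨hlen, hx⟩
  refine ⟨l.pmap (fun x hx => (⟨x, hx⟩ : Fin (n + 1)))
      (fun x hxl => Nat.lt_succ_of_le (hx x hxl)), ?_, ?_⟩
  · simpa using hlen
  · simp [List.map_pmap]

lemma U_finite (n : ℕ) : (U n).Finite := by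
  have hfin : ({l : List ℕ | l.length ≤ n ∧ ∀ x ∈ l, x ≤ n} ×ˢ
      (Set.Iic n ×ˢ {l : List ℕ | l.length ≤ n ∧ ∀ x ∈ l, x ≤ n})).Finite :=
    (lists_finite n).prod ((Set.finite_Iic n).prod (lists_finite n))
  refine hfin.subset ?_
  rintro ⟨a, c, b⟩ ⟨_, _, ha, hb, hc, hsum⟩
  dsimp only at *
  have hc' : c ≤ n := by omega
  have hla : a.sum ≤ n := by omega
  have hlb : b.sum ≤ n := by omega
  refine ⟨⟨?_, ?_⟩, ?_, ?_, ?_⟩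
  · exact le_trans (List.length_le_sum_of_one_le a fun i hi => (ha i hi).1) hla
  · exact fun x hx => le_trans (ha x hx).2 hc'
  · exact hc'
  · exact le_trans (List.length_le_sum_of_one_le b fun i hi => (hb i hi).1) hlb
  · exact fun x hx => le_trans (hb x hx).2 hc'

lemma U_eq_union (j n : ℕ) : U n = Tall j n ∪ NT j n := by
  ext p
  simp only [U, Tall, NT, Set.mem_setOf_eq, Set.mem_union]
  tauto

lemma disj (j n : ℕ) : Disjoint (Tall j n) (NT j n) := by
  rw [Set.disjoint_left]
  rintro p ⟨_, h⟩ ⟨_, h'⟩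
  exact h' h

lemma NT_finite (j n : ℕ) : (NT j n).Finite :=
  (U_finite n).subset (by rw [U_eq_union j n]; exact Set.subset_union_right)

lemma Tall_finite (j n : ℕ) : (Tall j n).Finite :=
  (U_finite n).subset (by rw [U_eq_union j n]; exact Set.subset_union_left)

/-- Raising the peak by `j`. -/
def φ (j : ℕ) (p : List ℕ × ℕ × List ℕ) : List ℕ × ℕ × List ℕ :=
  (p.1, p.2.1 + j, p.2.2)

lemma φ_inj (j : ℕ) : Function.Injective (φ j) := by
  rintro ⟨a, c, b⟩ ⟨a', c', b'⟩ h
  simp only [φ, Prod.mk.injEq] at h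
  obtain ⟨h1, h2, h3⟩ := h
  simp_all

lemma tall_eq_image (j n : ℕ) (hj : j ≤ n) : Tall j n = φ j '' U (n - j) := by
  ext ⟨a, c, b⟩
  constructor
  · rintro ⟨⟨hsa, hsb, ha, hb, hc, hsum⟩, htc, hta, htb⟩
    dsimp only at *
    refine ⟨(a, c - j, b), ⟨hsa, hsb,
        fun x hx => ⟨(ha x hx).1, ?_⟩,
        fun x hx => ⟨(hb x hx).1, ?_⟩, ?_, ?_⟩, ?_⟩
    · show x ≤ c - j
      have := hta x hx; omega
    · show x ≤ c - j
      have := htb x hx; omega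
    · show 1 ≤ c - j
      omega
    · show a.sum + (c - j) + b.sum = n - j
      omega
    · have hcj : c - j + j = c := by omega
      simp [φ, hcj]
  · rintro ⟨⟨a', c', b'⟩, ⟨hsa, hsb, ha, hb, hc, hsum⟩, heq⟩
    simp only [φ, Prod.mk.injEq] at heq
    dsimp only at *
    obtain ⟨rfl, rfl, rfl⟩ := heq
    refine ⟨⟨hsa, hsb,
        fun x hx => ⟨(ha x hx).1, ?_⟩,
        fun x hx => ⟨(hb x hx).1, ?_⟩, ?_, ?_⟩, ?_, ?_, ?_⟩
    · show x ≤ c' + j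
      have := (ha x hx).2; omega
    · show x ≤ c' + j
      have := (hb x hx).2; omega
    · show 1 ≤ c' + j
      omega
    · show a'.sum + (c' + j) + b'.sum = n
      omega
    · show j + 1 ≤ c' + j
      omega
    · intro x hx
      show x + j ≤ c' + j
      have := (ha x hx).2; omega
    · intro x hx
      show x + j ≤ c' + j
      have := (hb x hx).2; omega

lemma ncard_tall (j n : ℕ) (hj : j ≤ n) : (Tall j n).ncard = (U (n - j)).ncard := by
  rw [tall_eq_image j n hj, Set.ncard_image_of_injective _ (φ_inj j)]

lemma split (j n : ℕ) (hj : j ≤ n) :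
    (U n).ncard = (U (n - j)).ncard + (NT j n).ncard := by
  rw [U_eq_union j n, Set.ncard_union_eq (disj j n) (Tall_finite j n) (NT_finite j n),
    ncard_tall j n hj]

/-- Prepending `j` ones to the ascending run. -/
def ψ (j : ℕ) (p : List ℕ × ℕ × List ℕ) : List ℕ × ℕ × List ℕ :=
  (List.replicate j 1 ++ p.1, p.2.1, p.2.2)

lemma ψ_inj (j : ℕ) : Function.Injective (ψ j) := by
  rintro ⟨a, c, b⟩ ⟨a', c', b'⟩ h
  simp only [ψ, Prod.mk.injEq] at h
  obtain ⟨h1, h2, h3⟩ := h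
  have := List.append_cancel_left h1
  simp_all

lemma sorted_replicate_append (j : ℕ) (a : List ℕ) (hs : a.Pairwise (· ≤ ·))
    (ha : ∀ x ∈ a, 1 ≤ x) : (List.replicate j 1 ++ a).Pairwise (· ≤ ·) := by
  rw [List.pairwise_append]
  refine ⟨?_, hs, ?_⟩
  · exact List.pairwise_replicate.mpr (Or.inr le_rfl)
  · intro x hx y hy
    rw [List.eq_of_mem_replicate hx]
    exact ha y hy

lemma ψ_image_subset (j n : ℕ) (hj : j ≤ n) : ψ j '' NT j (n - j) ⊆ NT j n := by
  rintro _ ⟨⟨a, c, b⟩, ⟨⟨hsa, hsb, ha, hb, hc, hsum⟩, hnt⟩, rfl⟩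
  dsimp only at *
  refine ⟨⟨?_, hsb, ?_, hb, hc, ?_⟩, ?_⟩
  · exact sorted_replicate_append j a hsa fun x hx => (ha x hx).1
  · intro x hx
    rcases List.mem_append.mp hx with hx | hx
    · rw [List.eq_of_mem_replicate hx]; exact ⟨le_rfl, hc⟩
    · exact ha x hx
  · show (List.replicate j 1 ++ a).sum + c + b.sum = n
    rw [List.sum_append, List.sum_replicate]
    simp only [smul_eq_mul, mul_one]
    omega
  · simp only [TallCond, ψ] at hnt ⊢
    intro ⟨h1, h2, h3⟩
    exact hnt ⟨h1, fun x hx => h2 x (List.mem_append.mpr (Or.inr hx)), h3⟩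

lemma witness_mem (j n : ℕ) (hj : 0 < j) (hn : 1 ≤ n) :
    (([] : List ℕ), 1, List.replicate (n - 1) 1) ∈ NT j n := by
  refine ⟨⟨List.Pairwise.nil, ?_, by simp, ?_, le_rfl, ?_⟩, ?_⟩
  · exact List.pairwise_replicate.mpr (Or.inr le_rfl)
  · intro x hx
    rw [List.eq_of_mem_replicate hx]; exact ⟨le_rfl, le_rfl⟩
  · show ([] : List ℕ).sum + 1 + (List.replicate (n - 1) 1).sum = n
    rw [List.sum_replicate]
    simp only [smul_eq_mul, mul_one, List.sum_nil]
    omega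
  · intro h
    have h1 : j + 1 ≤ 1 := h.1
    omega

lemma witness_not_mem (j n : ℕ) (hj : 0 < j) :
    (([] : List ℕ), 1, List.replicate (n - 1) 1) ∉ ψ j '' NT j (n - j) := by
  rintro ⟨⟨a, c, b⟩, _, heq⟩
  simp only [ψ, Prod.mk.injEq] at heq
  have h1 := heq.1
  have hlen : (List.replicate j 1 ++ a).length = 0 := by rw [h1]; simp
  simp at hlen
  omega

lemma nt_lt (j n : ℕ) (hj : 0 < j) (hn : j + 1 ≤ n) :
    (NT j (n - j)).ncard < (NT j n).ncard := by
  have hss : ψ j '' NT j (n - j) ⊂ NT j n := by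
    refine ⟨ψ_image_subset j n (by omega), fun hsub => ?_⟩
    exact witness_not_mem j n hj (hsub (witness_mem j n hj (by omega)))
  calc (NT j (n - j)).ncard = (ψ j '' NT j (n - j)).ncard :=
        (Set.ncard_image_of_injective _ (ψ_inj j)).symm
    _ < (NT j n).ncard := Set.ncard_lt_ncard hss (NT_finite j n)

end UnimodalAux

theorem stmt2 :
    ∀ j : ℕ, 0 < j →
      ∃ nΔ : ℕ, 0 < nΔ ∧ 2 * j ≤ nΔ ∧
        ∀ n : ℕ, nΔ ≤ n →
          0 < (uCount n : ℤ) - 2 * (uCount (n - j) : ℤ) + (uCount (n - 2 * j) : ℤ) := by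
  intro j hj
  refine ⟨2 * j + 2, by omega, by omega, fun n hn => ?_⟩
  have h1 : (UnimodalAux.U n).ncard =
      (UnimodalAux.U (n - j)).ncard + (UnimodalAux.NT j n).ncard :=
    UnimodalAux.split j n (by omega)
  have h2 : (UnimodalAux.U (n - j)).ncard =
      (UnimodalAux.U (n - j - j)).ncard + (UnimodalAux.NT j (n - j)).ncard :=
    UnimodalAux.split j (n - j) (by omega)
  have h3 : (UnimodalAux.NT j (n - j)).ncard < (UnimodalAux.NT j n).ncard :=
    UnimodalAux.nt_lt j n hj (by omega)
  have e1 : uCount n = (UnimodalAux.U n).ncard := UnimodalAux.uCount_eq n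
  have e2 : uCount (n - j) = (UnimodalAux.U (n - j)).ncard := UnimodalAux.uCount_eq _
  have e3 : uCount (n - 2 * j) = (UnimodalAux.U (n - j - j)).ncard := by
    rw [show n - 2 * j = n - j - j by omega]; exact UnimodalAux.uCount_eq _
  omega
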